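/- If there exists a finite projective plane of order κ ≥ 2, then there exists a complete set of κ − 1 mutually projective Latin squares of order κ, i.e., κ − 1 pairwise distinct Latin squares of order κ, all with diagonal entries equal to the symbol 1, which are pairwise projective. -/

import Mathlib

/-!
Fix a line `linf` through two points `a`, `b`. Each point `x` of `linf` splits the affine points
(those off `linf`) into the κ lines through `x` other than `linf`; label them by `Fin κ`. Labellings
coming from distinct points of `linf` are orthogonal, since two such lines meet in exactly one
affine point. Columns come from `a`, symbols from `b`, and the rows of the s-th square from the s-th
of the κ − 1 remaining points of `linf`. Row `i` of one square and row `j` of another agree exactly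
in the column of the point where the two corresponding lines meet. Labelling the lines through `a`
and through every row point by their intersections with one fixed affine line `σ` through `b`, and
giving `σ` the symbol `1`, puts `1` on every diagonal.
-/

/-- A finite geometry (finite linear space): any two distinct points lie on exactly one
common line, and every line contains at least two points. -/
def IsGeometry {P : Type*} (lines : Finset (Finset P)) : Prop :=
  (∀ p q : P, p ≠ q → ∃! ℓ, ℓ ∈ lines ∧ p ∈ ℓ ∧ q ∈ ℓ) ∧
  (∀ ℓ ∈ lines, 2 ≤ ℓ.card)

/-- No three of the four points `a, b, c, d` lie on a common line. -/
def NoThreeCollinear {P : Type*} (lines : Finset (Finset P)) (a b c d : P) : Prop :=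
  ∀ ℓ ∈ lines,
    ¬(a ∈ ℓ ∧ b ∈ ℓ ∧ c ∈ ℓ) ∧ ¬(a ∈ ℓ ∧ b ∈ ℓ ∧ d ∈ ℓ) ∧
    ¬(a ∈ ℓ ∧ c ∈ ℓ ∧ d ∈ ℓ) ∧ ¬(b ∈ ℓ ∧ c ∈ ℓ ∧ d ∈ ℓ)

/-- A finite projective plane of order κ. -/
def IsProjectivePlane {P : Type*} (lines : Finset (Finset P)) (κ : ℕ) : Prop :=
  IsGeometry lines ∧
  (∀ ℓ₁ ∈ lines, ∀ ℓ₂ ∈ lines, ℓ₁ ≠ ℓ₂ → ∃ p, p ∈ ℓ₁ ∧ p ∈ ℓ₂) ∧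
  (∃ a b c d : P, a ≠ b ∧ a ≠ c ∧ a ≠ d ∧ b ≠ c ∧ b ≠ d ∧ c ≠ d ∧
    NoThreeCollinear lines a b c d) ∧
  (∀ ℓ ∈ lines, ℓ.card = κ + 1)

/-- A Latin square of order κ: each symbol occurs exactly once in every row and
exactly once in every column. -/
def IsLatinSquare {κ : ℕ} (L : Fin κ → Fin κ → Fin κ) : Prop :=
  (∀ i : Fin κ, Function.Bijective fun c => L i c) ∧
  (∀ c : Fin κ, Function.Bijective fun i => L i c)

/-- Two Latin squares are projective if for every row index `i` of the first and
every row index `j` of the second there is exactly one column where they agree. -/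
def ProjectivePair {κ : ℕ} (L₁ L₂ : Fin κ → Fin κ → Fin κ) : Prop :=
  ∀ i j : Fin κ, ∃! c : Fin κ, L₁ i c = L₂ j c

open Function

theorem Finset.exists_fin_enum {α : Type*} {s : Finset α} {n : ℕ} (h : s.card = n) :
    ∃ e : Fin n → α, Injective e ∧ ∀ x, x ∈ s ↔ ∃ i, e i = x := by
  let eqv := s.equivFinOfCardEq h
  refine ⟨fun i => (eqv.symm i).1, fun i j hij => eqv.symm.injective (Subtype.ext hij),
    fun x => ⟨fun hx => ⟨eqv ⟨x, hx⟩, by simp⟩, ?_⟩⟩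
  rintro ⟨i, rfl⟩
  exact (eqv.symm i).2

section Orthogonal

variable {A : Type*} {κ : ℕ} {f f' g k : A → Fin κ}

def Orthogonal (f g : A → Fin κ) : Prop :=
  Bijective fun p => (f p, g p)

theorem Orthogonal.exists_eq (h : Orthogonal f g) (i j : Fin κ) : ∃ p, f p = i ∧ g p = j := by
  obtain ⟨p, hp⟩ := h.2 (i, j)
  exact ⟨p, (Prod.ext_iff.1 hp).1, (Prod.ext_iff.1 hp).2⟩

noncomputable def Orthogonal.square (h : Orthogonal f g) (k : A → Fin κ) :
    Fin κ → Fin κ → Fin κ :=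
  fun i j => k ((Equiv.ofBijective _ h).symm (i, j))

theorem Orthogonal.square_eq (h : Orthogonal f g) (k : A → Fin κ) {p : A} {i j : Fin κ}
    (hi : f p = i) (hj : g p = j) : h.square k i j = k p := by
  subst hi hj
  exact congrArg k (Equiv.ofBijective_symm_apply_apply _ h p)

theorem Orthogonal.isLatinSquare_square (h : Orthogonal f g)
    (hfk : Injective fun p => (f p, k p)) (hgk : Injective fun p => (g p, k p)) :
    IsLatinSquare (h.square k) := by
  refine ⟨fun i => Finite.injective_iff_bijective.1 fun c c' hc => ?_,
    fun c => Finite.injective_iff_bijective.1 fun i i' hi => ?_⟩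
  · obtain ⟨p, hpi, rfl⟩ := h.exists_eq i c
    obtain ⟨p', hp'i, rfl⟩ := h.exists_eq i c'
    rw [h.square_eq k hpi rfl, h.square_eq k hp'i rfl] at hc
    rw [hfk (Prod.ext (hpi.trans hp'i.symm) hc)]
  · obtain ⟨p, rfl, hpc⟩ := h.exists_eq i c
    obtain ⟨p', rfl, hp'c⟩ := h.exists_eq i' c
    rw [h.square_eq k rfl hpc, h.square_eq k rfl hp'c] at hi
    rw [hgk (Prod.ext (hpc.trans hp'c.symm) hi)]

theorem Orthogonal.projectivePair_square (hfg : Orthogonal f g) (hf'g : Orthogonal f' g)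
    (hff' : Orthogonal f f') (hgk : Injective fun p => (g p, k p)) :
    ProjectivePair (hfg.square k) (hf'g.square k) := by
  intro i j
  obtain ⟨q, hqi, hqj⟩ := hff'.exists_eq i j
  refine ⟨g q, (hfg.square_eq k hqi rfl).trans (hf'g.square_eq k hqj rfl).symm, fun c hc => ?_⟩
  obtain ⟨p, hpi, rfl⟩ := hfg.exists_eq i c
  obtain ⟨p', hp'j, hp'c⟩ := hf'g.exists_eq j (g p)
  rw [hfg.square_eq k hpi rfl, hf'g.square_eq k hp'j hp'c] at hc
  obtain rfl : p' = p := hgk (Prod.ext hp'c hc.symm)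
  rw [hff'.1 (Prod.ext (hpi.trans hqi.symm) (hp'j.trans hqj.symm))]

theorem not_projectivePair_self (hκ : 1 < κ) (L : Fin κ → Fin κ → Fin κ) :
    ¬ProjectivePair L L := fun h => by
  obtain ⟨c, -, hc⟩ := h ⟨0, by omega⟩ ⟨0, by omega⟩
  exact absurd ((hc ⟨0, by omega⟩ rfl).trans (hc ⟨1, hκ⟩ rfl).symm) (by simp [Fin.ext_iff])

theorem exists_mpls_of_orthogonal {n : ℕ} (hκ : 1 < κ) (col sym : A → Fin κ)
    (row : Fin n → A → Fin κ) (d : Fin κ → A) (o : Fin κ)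
    (hrow_col : ∀ s, Orthogonal (row s) col)
    (hrow_row : Pairwise fun s t => Orthogonal (row s) (row t))
    (hrow_sym : ∀ s, Injective fun p => (row s p, sym p))
    (hcol_sym : Injective fun p => (col p, sym p))
    (hd : ∀ i, (∀ s, row s (d i) = i) ∧ col (d i) = i ∧ sym (d i) = o) :
    ∃ Ls : Fin n → (Fin κ → Fin κ → Fin κ),
      Injective Ls ∧ (∀ s, IsLatinSquare (Ls s)) ∧ (∀ s i, Ls s i i = o) ∧
      Pairwise fun s t => ProjectivePair (Ls s) (Ls t) := by
  have hproj : Pairwise fun s t => ProjectivePair ((hrow_col s).square sym)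
      ((hrow_col t).square sym) := fun s t hst =>
    (hrow_col s).projectivePair_square (hrow_col t) (hrow_row hst) hcol_sym
  refine ⟨fun s => (hrow_col s).square sym, fun s t hst => ?_,
    fun s => (hrow_col s).isLatinSquare_square (hrow_sym s) hcol_sym,
    fun s i => ((hrow_col s).square_eq sym ((hd i).1 s) (hd i).2.1).trans (hd i).2.2, hproj⟩
  by_contra hne
  have hself : ProjectivePair ((hrow_col s).square sym) ((hrow_col t).square sym) := hproj hne
  rw [show (hrow_col s).square sym = (hrow_col t).square sym from hst] at hself
  exact not_projectivePair_self hκ _ hself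

end Orthogonal

section Geometry

variable {P : Type*} {lines : Finset (Finset P)} {κ : ℕ}

def LinesMeet (lines : Finset (Finset P)) : Prop :=
  ∀ ℓ₁ ∈ lines, ∀ ℓ₂ ∈ lines, ℓ₁ ≠ ℓ₂ → ∃ p, p ∈ ℓ₁ ∧ p ∈ ℓ₂

def IsCollinear (lines : Finset (Finset P)) (x y z : P) : Prop :=
  ∃ ℓ ∈ lines, x ∈ ℓ ∧ y ∈ ℓ ∧ z ∈ ℓ

theorem IsGeometry.exists_line (hG : IsGeometry lines) {p q : P} (hpq : p ≠ q) :
    ∃ ℓ ∈ lines, p ∈ ℓ ∧ q ∈ ℓ :=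
  (hG.1 p q hpq).exists

theorem IsGeometry.eq_of_mem_of_mem (hG : IsGeometry lines) {ℓ m : Finset P} (hℓ : ℓ ∈ lines)
    (hm : m ∈ lines) {p q : P} (hpq : p ≠ q) (hpℓ : p ∈ ℓ) (hqℓ : q ∈ ℓ) (hpm : p ∈ m)
    (hqm : q ∈ m) : ℓ = m :=
  (hG.1 p q hpq).unique ⟨hℓ, hpℓ, hqℓ⟩ ⟨hm, hpm, hqm⟩

theorem IsGeometry.eq_of_mem_of_ne (hG : IsGeometry lines) {ℓ m : Finset P} (hℓ : ℓ ∈ lines)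
    (hm : m ∈ lines) (hℓm : ℓ ≠ m) {p q : P} (hpℓ : p ∈ ℓ) (hqℓ : q ∈ ℓ) (hpm : p ∈ m)
    (hqm : q ∈ m) : p = q := by
  by_contra hpq
  exact hℓm (hG.eq_of_mem_of_mem hℓ hm hpq hpℓ hqℓ hpm hqm)

variable {linf : Finset P}

/-- The affine points (those off `linf`) are labelled by the line through `x` they lie on. -/
def IsPencilLabel (lines : Finset (Finset P)) (linf : Finset P) (x : P)
    (f : {p // p ∉ linf} → Fin κ) : Prop :=
  Surjective f ∧ ∀ p q, f p = f q ↔ IsCollinear lines x p q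

theorem IsPencilLabel.comp_equiv {x : P} {f : {p // p ∉ linf} → Fin κ}
    (hf : IsPencilLabel lines linf x f) (π : Fin κ ≃ Fin κ) :
    IsPencilLabel lines linf x (π ∘ f) :=
  ⟨π.surjective.comp hf.1, fun p q => π.injective.eq_iff.trans (hf.2 p q)⟩

theorem IsPencilLabel.orthogonal (hG : IsGeometry lines) (hmeet : LinesMeet lines)
    (hlinf : linf ∈ lines) {x y : P} (hx : x ∈ linf) (hy : y ∈ linf) (hxy : x ≠ y)
    {f g : {p // p ∉ linf} → Fin κ} (hf : IsPencilLabel lines linf x f)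
    (hg : IsPencilLabel lines linf y g) : Orthogonal f g := by
  constructor
  · intro p q hpq
    obtain ⟨ℓ, hℓ, hxℓ, hpℓ, hqℓ⟩ := (hf.2 p q).1 (Prod.ext_iff.1 hpq).1
    obtain ⟨m, hm, hym, hpm, hqm⟩ := (hg.2 p q).1 (Prod.ext_iff.1 hpq).2
    by_contra hne
    obtain rfl := hG.eq_of_mem_of_mem hℓ hm (Subtype.coe_ne_coe.2 hne) hpℓ hqℓ hpm hqm
    exact p.2 (hG.eq_of_mem_of_mem hℓ hlinf hxy hxℓ hym hx hy ▸ hpℓ)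
  · rintro ⟨i, j⟩
    obtain ⟨p, rfl⟩ := hf.1 i
    obtain ⟨q, rfl⟩ := hg.1 j
    obtain ⟨ℓ, hℓ, hxℓ, hpℓ⟩ := hG.exists_line fun h : x = p => p.2 (h ▸ hx)
    obtain ⟨m, hm, hym, hqm⟩ := hG.exists_line fun h : y = q => q.2 (h ▸ hy)
    have hℓlinf : ℓ ≠ linf := fun h => p.2 (h ▸ hpℓ)
    have hmlinf : m ≠ linf := fun h => q.2 (h ▸ hqm)
    have hℓm : ℓ ≠ m := fun h =>
      hℓlinf (hG.eq_of_mem_of_mem hℓ hlinf hxy hxℓ (h ▸ hym) hx hy)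
    obtain ⟨r, hrℓ, hrm⟩ := hmeet ℓ hℓ m hm hℓm
    -- `ℓ` and `m` meet `linf` only in `x` and `y`
    have hr : r ∉ linf := fun hr => hxy <|
      (hG.eq_of_mem_of_ne hℓ hlinf hℓlinf hxℓ hrℓ hx hr).trans
        (hG.eq_of_mem_of_ne hm hlinf hmlinf hrm hym hr hy)
    exact ⟨⟨r, hr⟩, Prod.ext ((hf.2 _ _).2 ⟨ℓ, hℓ, hxℓ, hrℓ, hpℓ⟩)
      ((hg.2 _ _).2 ⟨m, hm, hym, hrm, hqm⟩)⟩

theorem exists_isPencilLabel (hG : IsGeometry lines) (hmeet : LinesMeet lines)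
    (hlinf : linf ∈ lines) {x : P} (hx : x ∈ linf) {τ : Finset P} (hτ : τ ∈ lines)
    (hxτ : x ∉ τ) {d : Fin κ → {p // p ∉ linf}} (hd : Injective d)
    (hdτ : ∀ q : {p // p ∉ linf}, q.1 ∈ τ ↔ ∃ i, d i = q) :
    ∃ f, IsPencilLabel lines linf x f ∧ ∀ i, f (d i) = i := by
  have hxd : ∀ i, x ≠ d i := fun i h => (d i).2 (h ▸ hx)
  -- the line through `x` and `p` meets the transversal `τ` in exactly one point
  have hproj : ∀ p : {p // p ∉ linf}, ∃! i, IsCollinear lines x p (d i) := by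
    intro p
    obtain ⟨ℓ, hℓ, hxℓ, hpℓ⟩ := hG.exists_line fun h : x = p => p.2 (h ▸ hx)
    have hℓτ : ℓ ≠ τ := fun h => hxτ (h ▸ hxℓ)
    obtain ⟨r, hrℓ, hrτ⟩ := hmeet ℓ hℓ τ hτ hℓτ
    have hr : r ∉ linf := fun hr =>
      hxτ (hG.eq_of_mem_of_ne hℓ hlinf (fun h => p.2 (h ▸ hpℓ)) hrℓ hxℓ hr hx ▸ hrτ)
    obtain ⟨i, hi⟩ := (hdτ ⟨r, hr⟩).1 hrτ
    refine ⟨i, ⟨ℓ, hℓ, hxℓ, hpℓ, hi ▸ hrℓ⟩, fun j ⟨m, hm, hxm, hpm, hjm⟩ => hd ?_⟩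
    obtain rfl := hG.eq_of_mem_of_mem hm hℓ (fun h : x = p => p.2 (h ▸ hx)) hxm hpm hxℓ hpℓ
    rw [hi]
    exact Subtype.ext (hG.eq_of_mem_of_ne hm hτ hℓτ hjm hrℓ ((hdτ _).2 ⟨j, rfl⟩) hrτ)
  choose f hf hfu using hproj
  have hfd : ∀ i, f (d i) = i := fun i =>
    (hfu _ i ((hG.exists_line (hxd i)).imp fun ℓ ⟨hℓ, hxℓ, hdℓ⟩ => ⟨hℓ, hxℓ, hdℓ, hdℓ⟩)).symm
  refine ⟨f, ⟨fun i => ⟨d i, hfd i⟩, fun p q => ⟨fun hpq => ?_, fun hpq => ?_⟩⟩, hfd⟩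
  · obtain ⟨ℓ, hℓ, hxℓ, hpℓ, hdℓ⟩ := hf p
    obtain ⟨m, hm, hxm, hqm, hdm⟩ := hf q
    rw [← hpq] at hdm
    exact ⟨ℓ, hℓ, hxℓ, hpℓ, hG.eq_of_mem_of_mem hm hℓ (hxd _) hxm hdm hxℓ hdℓ ▸ hqm⟩
  · obtain ⟨ℓ, hℓ, hxℓ, hpℓ, hqℓ⟩ := hpq
    obtain ⟨m, hm, hxm, hpm, hdm⟩ := hf p
    obtain rfl := hG.eq_of_mem_of_mem hm hℓ (fun h : x = p => p.2 (h ▸ hx)) hxm hpm hxℓ hpℓ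
    exact hfu q (f p) ⟨m, hm, hxm, hqℓ, hdm⟩

theorem exists_enum_affinePoints (hG : IsGeometry lines) (hmeet : LinesMeet lines)
    (hlinf : linf ∈ lines) {τ : Finset P} (hτ : τ ∈ lines) (hτlinf : τ ≠ linf)
    (hcard : τ.card = κ + 1) :
    ∃ d : Fin κ → {p // p ∉ linf}, Injective d ∧ ∀ q : {p // p ∉ linf}, q.1 ∈ τ ↔ ∃ i, d i = q := by
  classical
  obtain ⟨r, hrτ, hrlinf⟩ := hmeet τ hτ linf hlinf hτlinf
  have hinter : τ ∩ linf = {r} := Finset.eq_singleton_iff_unique_mem.2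
    ⟨Finset.mem_inter.2 ⟨hrτ, hrlinf⟩, fun q hq => hG.eq_of_mem_of_ne hτ hlinf hτlinf
      (Finset.mem_inter.1 hq).1 hrτ (Finset.mem_inter.1 hq).2 hrlinf⟩
  have hsdiff : (τ \ linf).card = κ := by
    have := Finset.card_sdiff_add_card_inter τ linf
    rw [hinter, Finset.card_singleton, hcard] at this
    omega
  obtain ⟨e, he, hmem⟩ := Finset.exists_fin_enum hsdiff
  have he' : ∀ i, e i ∈ τ \ linf := fun i => (hmem _).2 ⟨i, rfl⟩
  refine ⟨fun i => ⟨e i, (Finset.mem_sdiff.1 (he' i)).2⟩, fun i j h => he (congrArg Subtype.val h),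
    fun q => ⟨fun hq => ?_, ?_⟩⟩
  · obtain ⟨i, hi⟩ := (hmem q).1 (Finset.mem_sdiff.2 ⟨hq, q.2⟩)
    exact ⟨i, Subtype.ext hi⟩
  · rintro ⟨i, rfl⟩
    exact (Finset.mem_sdiff.1 (he' i)).1

theorem exists_normalized_pencilLabels (hG : IsGeometry lines) (hmeet : LinesMeet lines)
    (hcard : ∀ ℓ ∈ lines, ℓ.card = κ + 1) (hlinf : linf ∈ lines) {a b : P} (ha : a ∈ linf)
    (hb : b ∈ linf) (hab : a ≠ b) {σ : Finset P} (hσ : σ ∈ lines) (hbσ : b ∈ σ)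
    (hσlinf : σ ≠ linf) (o : Fin κ) :
    ∃ (lab : P → {p // p ∉ linf} → Fin κ) (sym : {p // p ∉ linf} → Fin κ)
      (d : Fin κ → {p // p ∉ linf}),
      (∀ x ∈ linf, x ≠ b → IsPencilLabel lines linf x (lab x) ∧ ∀ i, lab x (d i) = i) ∧
      IsPencilLabel lines linf b sym ∧ ∀ i, sym (d i) = o := by
  obtain ⟨d, hd, hdσ⟩ := exists_enum_affinePoints hG hmeet hlinf hσ hσlinf (hcard σ hσ)
  have : Nonempty (Fin κ) := ⟨o⟩
  choose! lab hlab using fun x (hx : x ∈ linf) (hxb : x ≠ b) =>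
    exists_isPencilLabel hG hmeet hlinf hx hσ
      (fun hxσ => hσlinf (hG.eq_of_mem_of_mem hσ hlinf hxb hxσ hbσ hx hb)) hd hdσ
  -- any line through `a` and an affine point serves as a transversal for the pencil of `b`
  obtain ⟨τ, hτ, haτ, hoτ⟩ := hG.exists_line fun h : a = d o => (d o).2 (h ▸ ha)
  have hbτ : b ∉ τ := fun h => (d o).2 (hG.eq_of_mem_of_mem hτ hlinf hab haτ h ha hb ▸ hoτ)
  obtain ⟨d', hd', hd'τ⟩ :=
    exists_enum_affinePoints hG hmeet hlinf hτ (fun h => hbτ (h ▸ hb)) (hcard τ hτ)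
  obtain ⟨f, hf, -⟩ := exists_isPencilLabel hG hmeet hlinf hb hτ hbτ hd' hd'τ
  refine ⟨lab, Equiv.swap (f (d o)) o ∘ f, d, hlab, hf.comp_equiv _, fun i => ?_⟩
  have hσd : ∀ j, (d j).1 ∈ σ := fun j => (hdσ _).2 ⟨j, rfl⟩
  rw [comp_apply, (hf.2 _ _).2 ⟨σ, hσ, hbσ, hσd i, hσd o⟩, Equiv.swap_apply_left]

end Geometry

/-- A finite projective plane of order κ ≥ 2 gives rise to a complete set of κ − 1
mutually projective Latin squares of order κ. -/
theorem plane_gives_mpls {κ : ℕ} (hκ : 2 ≤ κ) {P : Type*}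
    (lines : Finset (Finset P)) (hplane : IsProjectivePlane lines κ) :
    ∃ Ls : Fin (κ - 1) → (Fin κ → Fin κ → Fin κ),
      Function.Injective Ls ∧
      (∀ s, IsLatinSquare (Ls s)) ∧
      (∀ s, ∀ i : Fin κ, Ls s i i = ⟨1, by omega⟩) ∧
      (∀ s t, s ≠ t → ProjectivePair (Ls s) (Ls t)) := by
  classical
  obtain ⟨hG, hmeet, ⟨a, b, c, _, hab, -, -, hbc, -, -, hno⟩, hcard⟩ := hplane
  obtain ⟨linf, hlinf, ha, hb⟩ := hG.exists_line hab
  obtain ⟨σ, hσ, hbσ, hcσ⟩ := hG.exists_line hbc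
  have hσlinf : σ ≠ linf := fun h => (hno linf hlinf).1 ⟨ha, hb, h ▸ hcσ⟩
  obtain ⟨lab, sym, d, hlab, hsym, hsymd⟩ := exists_normalized_pencilLabels hG hmeet hcard hlinf
    ha hb hab hσ hbσ hσlinf ⟨1, by omega⟩
  obtain ⟨e, he, hemem⟩ := Finset.exists_fin_enum (s := (linf.erase a).erase b) (n := κ - 1) (by
    rw [Finset.card_erase_of_mem (Finset.mem_erase.2 ⟨hab.symm, hb⟩),
      Finset.card_erase_of_mem ha, hcard linf hlinf]
    omega)
  have he' : ∀ s, e s ≠ b ∧ e s ≠ a ∧ e s ∈ linf := by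
    simpa only [Finset.mem_erase] using fun s => (hemem (e s)).2 ⟨s, rfl⟩
  have hrow := fun s => hlab _ (he' s).2.2 (he' s).1
  have hcol := hlab a ha hab
  have orth := @IsPencilLabel.orthogonal _ _ κ _ hG hmeet hlinf
  exact exists_mpls_of_orthogonal (by omega) (lab a) sym (fun s => lab (e s)) d _
    (fun s => orth (he' s).2.2 ha (he' s).2.1 (hrow s).1 hcol.1)
    (fun s t hst => orth (he' s).2.2 (he' t).2.2 (he.ne hst) (hrow s).1 (hrow t).1)
    (fun s => (orth (he' s).2.2 hb (he' s).1 (hrow s).1 hsym).1)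
    (orth ha hb hab hcol.1 hsym).1
    fun i => ⟨fun s => (hrow s).2 i, hcol.2 i, hsymd i⟩
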